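/- arXiv:1410.2054 — 2 statements merged into one kernel-verified Lean document; each statement's English description precedes it below -/
import Mathlib

section
/- For a fixed integer m, the function h_m(n) = Σ_{k=1}^n gcd(k,n)·e^{-2πikm/n} is multiplicative in n: if gcd(u,v) = 1 then h_m(u)·h_m(v) = h_m(uv). -/
/-!
The summand `gcd(k, n) · exp(-2πi k m / n)` is `n`-periodic in `k`, so `h_m(n)` is a sum over
`ℤ/n`. For coprime `u` and `v`, the map `(a, b) ↦ a v + b u` is a bijection `ℤ/u × ℤ/v → ℤ/uv`,
and along it both factors of the summand split: `gcd(a v + b u, u v) = gcd(a, u) · gcd(b, v)` and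
`(a v + b u) m / (u v) = a m / u + b m / v`.
-/

open Finset

theorem Function.Periodic.sum_Icc_one_eq_sum_range {M : Type*} [AddCommMonoid M] {f : ℕ → M}
    {n : ℕ} (hf : Function.Periodic f n) : ∑ k ∈ Icc 1 n, f k = ∑ k ∈ range n, f k := by
  rw [← Ico_add_one_right_eq_Icc, ← zero_add 1, ← sum_Ico_add', ← range_eq_Ico]
  cases n with
  | zero => simp
  | succ n => rw [sum_range_succ, sum_range_succ' f, ← hf 0, zero_add]

theorem Nat.Coprime.modEq_of_mul_add_mul {u v a₁ a₂ b₁ b₂ : ℕ} (huv : u.Coprime v)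
    (h : a₁ * v + b₁ * u ≡ a₂ * v + b₂ * u [MOD u * v]) : a₁ ≡ a₂ [MOD u] := by
  have h' := h.of_mul_right v
  rw [Nat.ModEq, Nat.add_mul_mod_self_right, Nat.add_mul_mod_self_right] at h'
  exact Nat.ModEq.cancel_right_of_coprime huv h'

theorem Nat.Coprime.sum_range_mul_of_periodic {M : Type*} [AddCommMonoid M] {u v : ℕ}
    (huv : u.Coprime v) {f : ℕ → M} (hf : Function.Periodic f (u * v)) :
    ∑ k ∈ range (u * v), f k = ∑ a ∈ range u, ∑ b ∈ range v, f (a * v + b * u) := by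
  set g : ℕ × ℕ → ℕ := fun p ↦ (p.1 * v + p.2 * u) % (u * v)
  have hg : Set.InjOn g (range u ×ˢ range v : Finset (ℕ × ℕ)) := by
    rintro ⟨a₁, b₁⟩ h₁ ⟨a₂, b₂⟩ h₂ h
    simp only [coe_product, coe_range, Set.mem_prod, Set.mem_Iio] at h₁ h₂
    replace h : a₁ * v + b₁ * u ≡ a₂ * v + b₂ * u [MOD u * v] := h
    have ha : a₁ ≡ a₂ [MOD u] := huv.modEq_of_mul_add_mul h
    have hb : b₁ ≡ b₂ [MOD v] := by
      refine huv.symm.modEq_of_mul_add_mul (b₁ := a₁) (b₂ := a₂) ?_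
      rwa [add_comm, add_comm (b₂ * u), mul_comm v]
    rw [ha.eq_of_lt_of_lt h₁.1 h₂.1, hb.eq_of_lt_of_lt h₁.2 h₂.2]
  have himage : (range u ×ˢ range v).image g = range (u * v) := by
    refine eq_of_subset_of_card_le (image_subset_iff.2 ?_) ?_
    · rintro ⟨a, b⟩ hab
      simp only [mem_product, mem_range] at hab
      exact mem_range.2 (Nat.mod_lt _ (Nat.mul_pos (by omega) (by omega)))
    · rw [Finset.card_image_of_injOn hg, card_product, card_range, card_range, card_range]
  rw [← sum_product', ← himage, sum_image hg]
  simp only [g, hf.map_mod_nat]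

theorem Nat.Coprime.gcd_mul_add_mul {u v : ℕ} (huv : u.Coprime v) (a b : ℕ) :
    (a * v + b * u).gcd (u * v) = a.gcd u * b.gcd v := by
  rw [huv.gcd_mul, Nat.gcd_add_mul_right_left, huv.symm.gcd_mul_right_cancel, add_comm,
    Nat.gcd_add_mul_right_left, huv.gcd_mul_right_cancel]

noncomputable def gcdDFTSummand (m n k : ℕ) : ℂ :=
  Nat.gcd k n * Complex.exp (-(2 * Real.pi * Complex.I * k * m / n))

theorem gcdDFTSummand_periodic (m n : ℕ) : Function.Periodic (gcdDFTSummand m n) n := by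
  intro k
  rcases eq_or_ne n 0 with rfl | hn
  · simp
  have harg : -(2 * Real.pi * Complex.I * ((k + n : ℕ) : ℂ) * m / n) =
      -(2 * Real.pi * Complex.I * k * m / n) - m * (2 * Real.pi * Complex.I) := by
    push_cast
    field_simp
    ring
  rw [gcdDFTSummand, gcdDFTSummand, Nat.gcd_add_self_left, harg, Complex.exp_sub,
    Complex.exp_nat_mul_two_pi_mul_I, div_one]

theorem gcdDFTSummand_mul_gcdDFTSummand {m u v : ℕ} (hu : u ≠ 0) (hv : v ≠ 0)
    (huv : u.Coprime v) (a b : ℕ) :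
    gcdDFTSummand m u a * gcdDFTSummand m v b = gcdDFTSummand m (u * v) (a * v + b * u) := by
  have harg : -(2 * Real.pi * Complex.I * a * m / u) + -(2 * Real.pi * Complex.I * b * m / v) =
      -(2 * Real.pi * Complex.I * ((a * v + b * u : ℕ) : ℂ) * m / ((u * v : ℕ) : ℂ)) := by
    push_cast
    field_simp
    ring
  rw [gcdDFTSummand, gcdDFTSummand, gcdDFTSummand, huv.gcd_mul_add_mul, ← harg, Complex.exp_add]
  push_cast
  ring

theorem dft_gcd_multiplicative (m u v : ℕ) (hu : 0 < u) (hv : 0 < v)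
    (huv : Nat.Coprime u v) :
    (∑ k ∈ Finset.Icc 1 u, (Nat.gcd k u : ℂ) *
        Complex.exp (-(2 * Real.pi * Complex.I * k * m / u))) *
    (∑ k ∈ Finset.Icc 1 v, (Nat.gcd k v : ℂ) *
        Complex.exp (-(2 * Real.pi * Complex.I * k * m / v))) =
    ∑ k ∈ Finset.Icc 1 (u * v), (Nat.gcd k (u * v) : ℂ) *
        Complex.exp (-(2 * Real.pi * Complex.I * k * m / (u * v))) := by
  suffices (∑ k ∈ Icc 1 u, gcdDFTSummand m u k) * (∑ k ∈ Icc 1 v, gcdDFTSummand m v k) =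
      ∑ k ∈ Icc 1 (u * v), gcdDFTSummand m (u * v) k by
    simpa only [gcdDFTSummand, Nat.cast_mul] using this
  rw [(gcdDFTSummand_periodic m u).sum_Icc_one_eq_sum_range,
    (gcdDFTSummand_periodic m v).sum_Icc_one_eq_sum_range,
    (gcdDFTSummand_periodic m (u * v)).sum_Icc_one_eq_sum_range, sum_mul_sum,
    huv.sum_range_mul_of_periodic (gcdDFTSummand_periodic m (u * v))]
  exact sum_congr rfl fun a _ ↦ sum_congr rfl fun b _ ↦
    gcdDFTSummand_mul_gcdDFTSummand hu.ne' hv.ne' huv a b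
end

section
/- For a prime p, exponent s ≥ 1, and m = u·p^t with gcd(u,p) = 1 and t ≥ 0, one has Σ_{k=1}^{p^s} gcd(k,p^s)·e^{-2πikm/p^s} = (min(t,s)+1)·φ(p^s) + [t ≥ s]·p^{s-1}, where [t ≥ s] is 1 if t ≥ s and 0 otherwise. -/
/-!
Writing `gcd k n = ∑_{d ∣ gcd k n} φ d` and summing the geometric series over the multiples of
each `d` gives, for every primitive `n`-th root of unity `ζ`,
`∑_{k=1}^n gcd k n · ζ^(k m) = ∑_{d ∣ gcd n m} d · φ (n / d)`.
For `n = p^s` and `m = u p^t` we have `gcd n m = p^(min s t)`; the divisor `p^j` with `j < s`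
contributes `p^j φ(p^(s-j)) = φ(p^s)`, and `j = s` (only when `s ≤ t`) contributes
`p^s = φ(p^s) + p^(s-1)`.
-/

open Finset
open scoped Nat

theorem sum_Icc_pow_eq_ite_of_pow_eq_one {K : Type*} [DivisionRing K] [DecidableEq K] {ω : K}
    {N : ℕ} (hω : ω ^ N = 1) : ∑ k ∈ Icc 1 N, ω ^ k = if ω = 1 then (N : K) else 0 := by
  split_ifs with h
  · simp [h]
  · rw [← Ico_add_one_right_eq_Icc, geom_sum_Ico h (by omega), pow_succ, hω, one_mul, pow_one,
      sub_self, zero_div]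

theorem IsPrimitiveRoot.sum_Icc_pow_mul_eq_ite {K : Type*} [Field K] {ζ : K} {N : ℕ}
    (hζ : IsPrimitiveRoot ζ N) (m : ℕ) :
    ∑ k ∈ Icc 1 N, ζ ^ (k * m) = if N ∣ m then (N : K) else 0 := by
  classical
  have hN : (ζ ^ m) ^ N = 1 := by rw [← pow_mul, mul_comm, pow_mul, hζ.pow_eq_one, one_pow]
  simp_rw [mul_comm _ m, pow_mul, sum_Icc_pow_eq_ite_of_pow_eq_one hN, hζ.pow_eq_one_iff_dvd]

theorem Nat.sum_Icc_filter_dvd {M : Type*} [AddCommMonoid M] (f : ℕ → M) {d n : ℕ}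
    (hd : d ∣ n) : ∑ k ∈ Icc 1 n with d ∣ k, f k = ∑ j ∈ Icc 1 (n / d), f (d * j) := by
  rcases Nat.eq_zero_or_pos d with rfl | hd0
  · simp [zero_dvd_iff.mp hd]
  obtain ⟨e, rfl⟩ := hd
  rw [Nat.mul_div_cancel_left e hd0]
  refine sum_nbij' (· / d) (d * ·) ?_ ?_ ?_ ?_ ?_
  · intro k hk
    simp only [mem_filter, mem_Icc] at hk
    obtain ⟨⟨hk1, hke⟩, c, rfl⟩ := hk
    simp only [Nat.mul_div_cancel_left c hd0, mem_Icc]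
    exact ⟨Nat.pos_of_mul_pos_left hk1, Nat.le_of_mul_le_mul_left hke hd0⟩
  · intro j hj
    simp only [mem_filter, mem_Icc] at hj ⊢
    exact ⟨⟨Nat.mul_pos hd0 hj.1, Nat.mul_le_mul_left d hj.2⟩, dvd_mul_right d j⟩
  · intro k hk
    obtain ⟨c, rfl⟩ := (mem_filter.mp hk).2
    simp only [Nat.mul_div_cancel_left c hd0]
  · intro j _
    exact Nat.mul_div_cancel_left j hd0
  · intro k hk
    rw [Nat.mul_div_cancel' (mem_filter.mp hk).2]

theorem Nat.sum_Icc_gcd_mul {R : Type*} [Semiring R] (n : ℕ) (f : ℕ → R) :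
    ∑ k ∈ Icc 1 n, (Nat.gcd k n : R) * f k =
      ∑ d ∈ n.divisors, (φ d : R) * ∑ k ∈ Icc 1 n with d ∣ k, f k := by
  calc ∑ k ∈ Icc 1 n, (Nat.gcd k n : R) * f k
      = ∑ k ∈ Icc 1 n, ∑ d ∈ (Nat.gcd k n).divisors, (φ d : R) * f k := by
        simp_rw [← sum_mul, ← Nat.cast_sum, Nat.sum_totient]
    _ = ∑ d ∈ n.divisors, ∑ k ∈ Icc 1 n with d ∣ k, (φ d : R) * f k := by
        refine sum_comm' fun k d => ?_
        simp only [mem_Icc, mem_filter, Nat.mem_divisors, Nat.dvd_gcd_iff]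
        constructor
        · rintro ⟨⟨hk1, hkn⟩, ⟨hdk, hdn⟩, -⟩
          exact ⟨⟨⟨hk1, hkn⟩, hdk⟩, hdn, by omega⟩
        · rintro ⟨⟨⟨hk1, hkn⟩, hdk⟩, hdn, -⟩
          exact ⟨⟨hk1, hkn⟩, ⟨hdk, hdn⟩, (Nat.gcd_pos_of_pos_left n hk1).ne'⟩
    _ = _ := by simp_rw [mul_sum]

theorem IsPrimitiveRoot.sum_Icc_gcd_mul_pow_mul {K : Type*} [Field K] {ζ : K} {n : ℕ}
    (hζ : IsPrimitiveRoot ζ n) (m : ℕ) :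
    ∑ k ∈ Icc 1 n, (Nat.gcd k n : K) * ζ ^ (k * m) =
      ((∑ d ∈ (Nat.gcd n m).divisors, d * φ (n / d) : ℕ) : K) := by
  rcases eq_or_ne n 0 with rfl | hn
  · simp
  calc ∑ k ∈ Icc 1 n, (Nat.gcd k n : K) * ζ ^ (k * m)
      = ∑ d ∈ n.divisors, (φ d : K) * ∑ j ∈ Icc 1 (n / d), (ζ ^ d) ^ (j * m) := by
        rw [Nat.sum_Icc_gcd_mul]
        refine sum_congr rfl fun d hd => ?_
        simp_rw [Nat.sum_Icc_filter_dvd _ (Nat.dvd_of_mem_divisors hd), ← pow_mul, mul_assoc]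
    _ = ∑ d ∈ n.divisors, (φ d : K) * if n / d ∣ m then ((n / d : ℕ) : K) else 0 := by
        refine sum_congr rfl fun d hd => ?_
        have hζd := hζ.pow_of_dvd (Nat.pos_of_mem_divisors hd).ne' (Nat.dvd_of_mem_divisors hd)
        rw [hζd.sum_Icc_pow_mul_eq_ite]
    _ = ∑ d ∈ n.divisors, (φ (n / d) : K) * if d ∣ m then (d : K) else 0 := by
        rw [← Nat.sum_div_divisors]
        refine sum_congr rfl fun d hd => ?_
        rw [Nat.div_div_self (Nat.dvd_of_mem_divisors hd) hn]
    _ = _ := by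
        rw [← Nat.divisors_filter_dvd_of_dvd hn (Nat.gcd_dvd_left n m), sum_filter]
        push_cast
        refine sum_congr rfl fun d hd => ?_
        simp only [Nat.dvd_gcd_iff, Nat.dvd_of_mem_divisors hd, true_and]
        split_ifs <;> ring

theorem Nat.pow_mul_totient_pow_div_pow {p : ℕ} (hp : p.Prime) {j s : ℕ} (hjs : j < s) :
    p ^ j * φ (p ^ s / p ^ j) = φ (p ^ s) := by
  rw [Nat.pow_div hjs.le hp.pos, totient_prime_pow hp (by omega), totient_prime_pow hp (by omega),
    ← mul_assoc, ← pow_add]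
  congr 2
  omega

theorem Nat.sum_divisors_gcd_prime_pow {p s t u : ℕ} (hp : p.Prime) (hs : s ≠ 0)
    (hu : u.Coprime p) :
    ∑ d ∈ (Nat.gcd (p ^ s) (u * p ^ t)).divisors, d * φ (p ^ s / d) =
      (min t s + 1) * φ (p ^ s) + if s ≤ t then p ^ (s - 1) else 0 := by
  rw [Nat.Coprime.gcd_mul_left_cancel_right _ (hu.pow_right s)]
  rcases le_or_gt s t with hst | hts
  · have hps : p ^ s = φ (p ^ s) + p ^ (s - 1) := by
      obtain ⟨r, rfl⟩ := Nat.exists_eq_add_one_of_ne_zero hs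
      rw [totient_prime_pow_succ hp, Nat.add_sub_cancel, pow_succ, ← mul_add_one,
        Nat.sub_add_cancel hp.one_le]
    rw [Nat.gcd_eq_left (pow_dvd_pow p hst), sum_divisors_prime_pow hp, sum_range_succ,
      sum_congr rfl fun j hj => pow_mul_totient_pow_div_pow hp (mem_range.mp hj), sum_const,
      card_range, smul_eq_mul, Nat.div_self (pow_pos hp.pos s), totient_one, mul_one,
      min_eq_right hst, if_pos hst]
    linarith
  · rw [Nat.gcd_eq_right (pow_dvd_pow p hts.le), sum_divisors_prime_pow hp,
      sum_congr rfl fun j hj => pow_mul_totient_pow_div_pow hp ((mem_range.mp hj).trans_le hts),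
      sum_const, card_range, smul_eq_mul, min_eq_left hts.le, if_neg hts.not_ge, add_zero]

theorem dft_gcd_prime_power (p s t u : ℕ) (hp : p.Prime) (hs : 1 ≤ s)
    (hu : Nat.Coprime u p) :
    ∑ k ∈ Finset.Icc 1 (p ^ s), (Nat.gcd k (p ^ s) : ℂ) *
        Complex.exp (-(2 * Real.pi * Complex.I * k * (u * p ^ t) / (p ^ s))) =
      ((min t s + 1 : ℕ) : ℂ) * (Nat.totient (p ^ s) : ℂ) +
        (if s ≤ t then ((p ^ (s - 1) : ℕ) : ℂ) else 0) := by
  have hζ := (Complex.isPrimitiveRoot_exp (p ^ s) (pow_ne_zero s hp.ne_zero)).inv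
  have hexp : ∀ k : ℕ, Complex.exp (-(2 * Real.pi * Complex.I * k * (u * p ^ t) / (p ^ s))) =
      (Complex.exp (2 * Real.pi * Complex.I / (p ^ s : ℕ)))⁻¹ ^ (k * (u * p ^ t)) := by
    intro k
    rw [← Complex.exp_neg, ← Complex.exp_nat_mul]
    push_cast
    ring_nf
  simp_rw [hexp]
  rw [hζ.sum_Icc_gcd_mul_pow_mul,
    Nat.sum_divisors_gcd_prime_pow hp (Nat.one_le_iff_ne_zero.mp hs) hu]
  push_cast
  split_ifs <;> rfl
end
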